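/- If the preference relation is empty, then the preferred answer sets of (P, ∅) under the fragment-based semantics G coincide exactly with the answer sets of P. -/

import Mathlib

/-- A literal over atoms `A`: `(true, a)` is the atom `a`, `(false, a)` is `¬ a`. -/
abbrev Lit (A : Type) := Bool × A

/-- A rule with head, positive body and negative body. -/
structure Rule (A : Type) where
  head : Lit A
  pos : Set (Lit A)
  neg : Set (Lit A)

variable {A : Type}

/-- Heads of a set of rules. -/
def headSet (R : Set (Rule A)) : Set (Lit A) := Rule.head '' R

/-- `R ⊆ P` positively satisfies `P`. -/
def PosSat (P R : Set (Rule A)) : Prop :=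
  R ⊆ P ∧ ∀ r ∈ P, r.pos ⊆ headSet R → r ∈ R

/-- The minimal set of rules positively satisfying `P`. -/
def MP (P : Set (Rule A)) : Set (Rule A) := ⋂₀ {R | PosSat P R}

/-- A set of rules defeats a rule. -/
def defeatsRule (R : Set (Rule A)) (r : Rule A) : Prop :=
  (headSet R ∩ r.neg).Nonempty

/-- A set of rules defeats a set of rules. -/
def defeatsSet (R₁ R₂ : Set (Rule A)) : Prop := ∃ r ∈ R₂, defeatsRule R₁ r

/-- The reduct `P^R` removes each rule defeated by `R`. -/
def reduct (P R : Set (Rule A)) : Set (Rule A) := {r ∈ P | ¬ defeatsRule R r}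

/-- `R ⊆ P` is a generating set of `P` iff `R = MP (P^R)`. -/
def GenSet (P R : Set (Rule A)) : Prop := R ⊆ P ∧ R = MP (reduct P R)

/-- A set of literals is consistent iff it contains no complementary pair. -/
def Consistent (S : Set (Lit A)) : Prop :=
  ∀ a : A, ¬ (((true, a) ∈ S) ∧ ((false, a) ∈ S))

/-- Answer sets via generating sets. -/
def AnswerSet (P : Set (Rule A)) (S : Set (Lit A)) : Prop :=
  Consistent S ∧ ∃ R, GenSet P R ∧ headSet R = S

/-- `Γ_S(P)`: rules whose positive body is in `S` and negative body disjoint from `S`. -/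
def Gamma (S : Set (Lit A)) (P : Set (Rule A)) : Set (Rule A) :=
  {r ∈ P | r.pos ⊆ S ∧ r.neg ∩ S = ∅}

/-- Fragments of a program. -/
def Frag (P : Set (Rule A)) : Set (Set (Rule A)) := {R | R ⊆ P ∧ MP R = R}

/-- Fragment reduct: remove fragments defeated by a member of `E`. -/
def fragReduct (P : Set (Rule A)) (E : Set (Set (Rule A))) : Set (Set (Rule A)) :=
  {X ∈ Frag P | ¬ ∃ Y ∈ E, defeatsSet Y X}

/-- Stable fragment sets. -/
def StableFragSet (P : Set (Rule A)) (E : Set (Set (Rule A))) : Prop :=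
  E ⊆ Frag P ∧ fragReduct P E = E

/-- Mutually defeating (conflicting) sets of rules. -/
def Conflicting (X Y : Set (Rule A)) : Prop := defeatsSet X Y ∧ defeatsSet Y X

/-- `X` overrides `Y` w.r.t. the preference relation `lt`. -/
def Overrides (lt : Rule A → Rule A → Prop) (X Y : Set (Rule A)) : Prop :=
  Conflicting X Y ∧
    ∀ r₁ ∈ X, defeatsRule Y r₁ → ∃ r₂ ∈ Y, defeatsRule X r₂ ∧ lt r₂ r₁

/-- Preferred fragment reduct (semantics G). -/
def prefFragReduct (lt : Rule A → Rule A → Prop) (P : Set (Rule A))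
    (E : Set (Set (Rule A))) : Set (Set (Rule A)) :=
  {X ∈ Frag P | ¬ ∃ Y ∈ E, defeatsSet Y X ∧ ¬ Overrides lt X Y}

/-- Preferred stable fragment sets (semantics G). -/
def PrefStableFragSet (lt : Rule A → Rule A → Prop) (P : Set (Rule A))
    (E : Set (Set (Rule A))) : Prop :=
  E ⊆ Frag P ∧ prefFragReduct lt P E = E

/-- Preferred answer sets under the fragment-based semantics G. -/
def GPrefAnswerSet (lt : Rule A → Rule A → Prop) (P : Set (Rule A))
    (S : Set (Lit A)) : Prop :=
  Consistent S ∧ ∃ E, PrefStableFragSet lt P E ∧ headSet (⋃₀ E) = S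

/-- `T(r,R)` for semantics GNO. -/
def Trules (lt : Rule A → Rule A → Prop) (r : Rule A) (R : Set (Rule A)) :
    Set (Rule A) :=
  MP {p ∈ R | ¬ lt p r}

/-- GNO reduct: remove rules `r` with `body⁻(r) ∩ head(T(r,R)) ≠ ∅`. -/
def gnoReduct (lt : Rule A → Rule A → Prop) (P R : Set (Rule A)) : Set (Rule A) :=
  {r ∈ P | ¬ (r.neg ∩ headSet (Trules lt r R)).Nonempty}

/-- GNO-preferred generating sets. -/
def GNOPrefGen (lt : Rule A → Rule A → Prop) (P R : Set (Rule A)) : Prop :=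
  GenSet P R ∧ R = MP (gnoReduct lt P R)

/-- GNO-preferred answer sets. -/
def GNOPrefAnswerSet (lt : Rule A → Rule A → Prop) (P : Set (Rule A))
    (S : Set (Lit A)) : Prop :=
  Consistent S ∧ ∃ R, GNOPrefGen lt P R ∧ headSet R = S

/-- A rule defeats a rule. -/
def defeats (r₁ r₂ : Rule A) : Prop := r₁.head ∈ r₂.neg

/-- `r₁` directly overrides `r₂` w.r.t. `lt`. -/
def DirOverrides (lt : Rule A → Rule A → Prop) (r₁ r₂ : Rule A) : Prop :=
  (defeats r₁ r₂ ∧ defeats r₂ r₁) ∧ lt r₂ r₁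

/-- D-reduct for the direct-conflict semantics. -/
def dReduct (lt : Rule A → Rule A → Prop) (P R : Set (Rule A)) : Set (Rule A) :=
  {r₁ ∈ P | ¬ ∃ r₂ ∈ R, defeats r₂ r₁ ∧ ¬ DirOverrides lt r₁ r₂}

/-- D-preferred generating sets. -/
def DPrefGen (lt : Rule A → Rule A → Prop) (P R : Set (Rule A)) : Prop :=
  R = MP (dReduct lt P R)

/-- D-preferred answer sets. -/
def DPrefAnswerSet (lt : Rule A → Rule A → Prop) (P : Set (Rule A))
    (S : Set (Lit A)) : Prop :=
  Consistent S ∧ ∃ R, DPrefGen lt P R ∧ headSet R = S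

/-- Stratified programs. -/
def Stratified (P : Set (Rule A)) : Prop :=
  ∃ lam : Lit A → ℕ, ∀ r ∈ P,
    (∀ l ∈ r.pos, lam l ≤ lam r.head) ∧ (∀ l ∈ r.neg, lam l < lam r.head)

/-!
With the empty preference no fragment overrides another, so semantics G collapses to plain
stable fragment sets. A fragment avoids defeat by `R` iff it lies inside the reduct `P^R`, and the
fragments inside a subprogram `Q ⊆ P` have union `MP Q`. Hence a stable fragment set `E` is the set
of all fragments inside `P^{⋃E}`, its union `⋃E` is a generating set, and conversely a generating
set `R` is the union of the stable fragment set of all fragments inside `P^R`.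
-/

variable {P Q R X : Set (Rule A)}

lemma headSet_mono (h : R ⊆ Q) : headSet R ⊆ headSet Q :=
  Set.image_mono h

lemma MP_subset_of_posSat (h : PosSat Q R) : MP Q ⊆ R :=
  fun _ hx => Set.mem_sInter.mp hx R h

lemma posSat_MP (Q : Set (Rule A)) : PosSat Q (MP Q) := by
  refine ⟨MP_subset_of_posSat ⟨subset_rfl, fun r hr _ => hr⟩, fun r hr hpos => ?_⟩
  exact Set.mem_sInter.mpr fun R hR =>
    hR.2 r hr (hpos.trans (headSet_mono (MP_subset_of_posSat hR)))

lemma MP_subset (Q : Set (Rule A)) : MP Q ⊆ Q :=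
  (posSat_MP Q).1

lemma MP_mono (h : Q ⊆ R) : MP Q ⊆ MP R := by
  have : PosSat Q (MP R ∩ Q) := by
    refine ⟨Set.inter_subset_right, fun r hr hpos => ⟨?_, hr⟩⟩
    exact (posSat_MP R).2 r (h hr) (hpos.trans (headSet_mono Set.inter_subset_left))
  exact (MP_subset_of_posSat this).trans Set.inter_subset_left

lemma MP_MP (Q : Set (Rule A)) : MP (MP Q) = MP Q := by
  refine (MP_subset _).antisymm (fun x hx => Set.mem_sInter.mpr fun R hR => ?_)
  have : PosSat Q R := by
    refine ⟨hR.1.trans (MP_subset Q), fun r hr hpos => hR.2 r ?_ hpos⟩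
    exact (posSat_MP Q).2 r hr (hpos.trans (headSet_mono hR.1))
  exact MP_subset_of_posSat this hx

lemma MP_mem_frag (hQ : Q ⊆ P) : MP Q ∈ Frag P :=
  ⟨(MP_subset Q).trans hQ, MP_MP Q⟩

lemma subset_MP_of_mem_frag (hX : X ∈ Frag P) (h : X ⊆ Q) : X ⊆ MP Q :=
  hX.2 ▸ MP_mono h

lemma sUnion_frag_subset (hQ : Q ⊆ P) : ⋃₀ {X ∈ Frag P | X ⊆ Q} = MP Q :=
  (Set.sUnion_subset fun _ hX => subset_MP_of_mem_frag hX.1 hX.2).antisymm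
    (Set.subset_sUnion_of_mem ⟨MP_mem_frag hQ, MP_subset Q⟩)

lemma reduct_subset (P R : Set (Rule A)) : reduct P R ⊆ P :=
  Set.sep_subset P _

lemma not_defeatsSet_iff_subset_reduct (hX : X ⊆ P) :
    ¬ defeatsSet R X ↔ X ⊆ reduct P R := by
  constructor
  · intro h r hr
    exact ⟨hX hr, fun hd => h ⟨r, hr, hd⟩⟩
  · rintro h ⟨r, hr, hd⟩
    exact (h hr).2 hd

lemma defeatsSet_sUnion_iff (E : Set (Set (Rule A))) (X : Set (Rule A)) :
    defeatsSet (⋃₀ E) X ↔ ∃ Y ∈ E, defeatsSet Y X := by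
  constructor
  · rintro ⟨r, hr, _, ⟨r', ⟨Y, hY, hr'Y⟩, rfl⟩, hneg⟩
    exact ⟨Y, hY, r, hr, r'.head, ⟨r', hr'Y, rfl⟩, hneg⟩
  · rintro ⟨Y, hY, r, hr, l, hl, hneg⟩
    exact ⟨r, hr, l, headSet_mono (Set.subset_sUnion_of_mem hY) hl, hneg⟩

lemma fragReduct_eq (P : Set (Rule A)) (E : Set (Set (Rule A))) :
    fragReduct P E = {X ∈ Frag P | X ⊆ reduct P (⋃₀ E)} := by
  ext X
  simp only [fragReduct, Set.mem_ofPred_eq, ← defeatsSet_sUnion_iff]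
  exact and_congr_right fun hX => not_defeatsSet_iff_subset_reduct hX.1

lemma not_overrides_bot (X Y : Set (Rule A)) : ¬ Overrides (fun _ _ => False) X Y := by
  rintro ⟨⟨_, r, hr, hd⟩, hall⟩
  obtain ⟨_, _, _, hfalse⟩ := hall r hr hd
  exact hfalse

lemma prefFragReduct_bot (P : Set (Rule A)) (E : Set (Set (Rule A))) :
    prefFragReduct (fun _ _ => False) P E = fragReduct P E := by
  ext X
  simp only [prefFragReduct, fragReduct, Set.mem_ofPred_eq, not_overrides_bot,
    not_false_eq_true, and_true]

lemma prefStableFragSet_bot_iff {E : Set (Set (Rule A))} :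
    PrefStableFragSet (fun _ _ => False) P E ↔ StableFragSet P E := by
  rw [PrefStableFragSet, StableFragSet, prefFragReduct_bot]

lemma StableFragSet.genSet_sUnion {E : Set (Set (Rule A))} (h : StableFragSet P E) :
    GenSet P (⋃₀ E) := by
  have hU : ⋃₀ E = MP (reduct P (⋃₀ E)) :=
    calc ⋃₀ E = ⋃₀ fragReduct P E := by rw [h.2]
      _ = MP (reduct P (⋃₀ E)) := by
        rw [fragReduct_eq, sUnion_frag_subset (reduct_subset P _)]
  refine ⟨?_, hU⟩
  rw [hU]
  exact (MP_subset _).trans (reduct_subset P _)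

lemma GenSet.sUnion_frag_subset_reduct (h : GenSet P R) :
    ⋃₀ {X ∈ Frag P | X ⊆ reduct P R} = R :=
  (sUnion_frag_subset (reduct_subset P R)).trans h.2.symm

lemma GenSet.stableFragSet (h : GenSet P R) :
    StableFragSet P {X ∈ Frag P | X ⊆ reduct P R} :=
  ⟨fun _ hX => hX.1, by rw [fragReduct_eq, h.sUnion_frag_subset_reduct]⟩

theorem gPref_empty_eq_answerSet_general (P : Set (Rule A))
    (S : Set (Lit A)) :
    GPrefAnswerSet (fun _ _ => False) P S ↔ AnswerSet P S := by
  constructor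
  · rintro ⟨hS, E, hE, rfl⟩
    exact ⟨hS, ⋃₀ E, (prefStableFragSet_bot_iff.mp hE).genSet_sUnion, rfl⟩
  · rintro ⟨hS, R, hR, rfl⟩
    exact ⟨hS, _, prefStableFragSet_bot_iff.mpr hR.stableFragSet,
      by rw [hR.sUnion_frag_subset_reduct]⟩

/-- with the empty preference relation, G-preferred answer sets
coincide with answer sets. -/
theorem gPref_empty_eq_answerSet (P : Set (Rule A)) (hP : P.Finite)
    (S : Set (Lit A)) :
    GPrefAnswerSet (fun _ _ => False) P S ↔ AnswerSet P S :=
  gPref_empty_eq_answerSet_general P S
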